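/- arXiv:1307.7721 — 2 statements merged into one kernel-verified Lean document; each statement's English description precedes it below -/
import Mathlib

section
/- Let T : (0,1) → ℝ be square-integrable with respect to Lebesgue measure and almost everywhere increasing, i.e. there is a Borel set B ⊆ (0,1) of full Lebesgue measure such that for all x, y ∈ B with x < y one has T(x) ≤ T(y). Then there exists a Borel probability measure ν on ℝ with finite second moment such that T = F_ν⁻ Lebesgue-almost everywhere on (0,1). -/
open MeasureTheory

noncomputable section

/-- `ν` has a finite second moment. -/
def FinSecondMoment (ν : Measure ℝ) : Prop :=
  ∫⁻ x, ENNReal.ofReal (x ^ 2) ∂ν < ⊤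

/-- `ν ∈ W₂(ℝ)`: a Borel probability measure on `ℝ` with finite second moment. -/
def MemW2 (ν : Measure ℝ) : Prop :=
  IsProbabilityMeasure ν ∧ FinSecondMoment ν

/-- `π` is a coupling of `ν₁` and `ν₂`. -/
def IsCoupling (π : Measure (ℝ × ℝ)) (ν₁ ν₂ : Measure ℝ) : Prop :=
  IsProbabilityMeasure π ∧ π.map Prod.fst = ν₁ ∧ π.map Prod.snd = ν₂

/-- The quadratic Wasserstein distance. -/
noncomputable def Wdist (ν₁ ν₂ : Measure ℝ) : ℝ :=
  Real.sqrt (⨅ π : {π : Measure (ℝ × ℝ) // IsCoupling π ν₁ ν₂},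
      ∫⁻ p, ENNReal.ofReal ((p.1 - p.2) ^ 2) ∂(π.1)).toReal

/-- The cumulative distribution function of `ν`. -/
def cdf' (ν : Measure ℝ) (x : ℝ) : ℝ := (ν (Set.Iic x)).toReal

/-- The quantile function of `ν`. -/
noncomputable def quantile (ν : Measure ℝ) (y : ℝ) : ℝ := sInf {x : ℝ | y ≤ cdf' ν x}

/-- The logarithmic map at `μ`: `log_μ(ν) = F_ν⁻ ∘ F_μ - id`. -/
noncomputable def logMap (μ ν : Measure ℝ) : ℝ → ℝ := fun x => quantile ν (cdf' μ x) - x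

/-- The exponential map at `μ`: `exp_μ(v) = (id + v) # μ`. -/
noncomputable def expMap (μ : Measure ℝ) (v : ℝ → ℝ) : Measure ℝ := μ.map fun x => x + v x

/-- `μ` is atomless. -/
def Atomless (μ : Measure ℝ) : Prop := ∀ x : ℝ, μ {x} = 0

/-!
Take `ν` to be the law of `T` under Lebesgue measure on `(0,1)`. Since `T` is increasing on a
conull set `B`, for `y ∈ B` the event `{T ≤ T y}` contains `(0, y] ∩ B`, so `F_ν (T y) ≥ y`,
that is `F_ν⁻ y ≤ T y`. On the other hand `F_ν⁻` itself has law `ν` under Lebesgue measure.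
Two real random variables with the same law, one almost surely below the other, agree almost
surely.
-/

open Set Filter Topology ProbabilityTheory

lemma cdf'_eq_cdf (ν : Measure ℝ) [IsProbabilityMeasure ν] : cdf' ν = cdf ν :=
  funext fun x => (cdf_eq_real ν x).symm

section Quantile

variable (ν : Measure ℝ) {y : ℝ}

lemma nonempty_le_cdf (hy : y < 1) : {x | y ≤ cdf ν x}.Nonempty :=
  let ⟨x, hx⟩ := ((tendsto_cdf_atTop ν).eventually (eventually_gt_nhds hy)).exists
  ⟨x, hx.le⟩

lemma bddBelow_le_cdf (hy : 0 < y) : BddBelow {x | y ≤ cdf ν x} := by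
  obtain ⟨x₀, hx₀⟩ := ((tendsto_cdf_atBot ν).eventually (eventually_lt_nhds hy)).exists
  refine ⟨x₀, fun z hz => ?_⟩
  by_contra! hzx
  exact (hz.trans (monotone_cdf ν hzx.le)).not_gt hx₀

variable [IsProbabilityMeasure ν]

lemma quantile_eq_sInf_cdf : quantile ν y = sInf {x | y ≤ cdf ν x} := by
  rw [quantile, cdf'_eq_cdf]

lemma le_cdf_quantile (hy : y ∈ Ioo 0 1) : y ≤ cdf ν (quantile ν y) := by
  rw [quantile_eq_sInf_cdf]
  have hcont : Tendsto (cdf ν) (𝓝[>] (sInf {x | y ≤ cdf ν x})) (𝓝 (cdf ν _)) :=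
    ((cdf ν).right_continuous _).mono_left (nhdsWithin_mono _ Ioi_subset_Ici_self)
  refine ge_of_tendsto hcont ?_
  filter_upwards [self_mem_nhdsWithin] with z hz
  obtain ⟨s, hs, hsz⟩ := exists_lt_of_csInf_lt (nonempty_le_cdf ν hy.2) hz
  exact hs.trans (monotone_cdf ν hsz.le)

lemma quantile_le_iff (hy : y ∈ Ioo 0 1) (x : ℝ) :
    quantile ν y ≤ x ↔ y ≤ cdf ν x := by
  refine ⟨fun h => (le_cdf_quantile ν hy).trans (monotone_cdf ν h), fun h => ?_⟩
  rw [quantile_eq_sInf_cdf]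
  exact csInf_le (bddBelow_le_cdf ν hy.1) h

lemma monotoneOn_quantile : MonotoneOn (quantile ν) (Ioo 0 1) := fun _ ha _ hb hab =>
  (quantile_le_iff ν ha _).2 (hab.trans (le_cdf_quantile ν hb))

end Quantile

lemma volume_Iic_inter_Ioo {c : ℝ} (hc : c ≤ 1) :
    volume (Iic c ∩ Ioo 0 1) = ENNReal.ofReal c := by
  refine le_antisymm ?_ ?_
  · calc volume (Iic c ∩ Ioo 0 1) ≤ volume (Ioc 0 c) :=
          measure_mono fun z hz => ⟨hz.2.1, hz.1⟩
      _ = ENNReal.ofReal c := by rw [Real.volume_Ioc, sub_zero]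
  · calc ENNReal.ofReal c = volume (Ioo 0 c) := by rw [Real.volume_Ioo, sub_zero]
      _ ≤ volume (Iic c ∩ Ioo 0 1) :=
          measure_mono fun z hz => ⟨hz.2.le, hz.1, hz.2.trans_le hc⟩

instance isProbabilityMeasure_volume_restrict_Ioo :
    IsProbabilityMeasure (volume.restrict (Ioo (0 : ℝ) 1)) :=
  ⟨by simp⟩

lemma aemeasurable_quantile (ν : Measure ℝ) [IsProbabilityMeasure ν] :
    AEMeasurable (quantile ν) (volume.restrict (Ioo 0 1)) :=
  aemeasurable_restrict_of_monotoneOn measurableSet_Ioo (monotoneOn_quantile ν)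

lemma map_quantile_volume_restrict_Ioo (ν : Measure ℝ) [IsProbabilityMeasure ν] :
    (volume.restrict (Ioo 0 1)).map (quantile ν) = ν := by
  have hq := aemeasurable_quantile ν
  have : IsProbabilityMeasure ((volume.restrict (Ioo 0 1)).map (quantile ν)) :=
    Measure.isProbabilityMeasure_map hq
  refine Measure.ext_of_Iic _ _ fun x => ?_
  have hpre : quantile ν ⁻¹' Iic x ∩ Ioo 0 1 = Iic (cdf ν x) ∩ Ioo 0 1 := by
    ext y
    exact and_congr_left fun hy => quantile_le_iff ν hy x
  rw [Measure.map_apply_of_aemeasurable hq measurableSet_Iic,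
    Measure.restrict_apply' measurableSet_Ioo, hpre,
    volume_Iic_inter_Ioo (cdf_le_one ν x), ofReal_cdf]

lemma finSecondMoment_map {α : Type*} [MeasurableSpace α] {μ : Measure α} {f : α → ℝ}
    (hf : MemLp f 2 μ) : FinSecondMoment (μ.map f) := by
  rw [FinSecondMoment, lintegral_map' (by fun_prop) hf.aestronglyMeasurable.aemeasurable]
  exact hf.integrable_sq.lintegral_lt_top

lemma quantile_map_ae_le_of_monotoneOn {T : ℝ → ℝ}
    (hT : AEMeasurable T (volume.restrict (Ioo 0 1))) {B : Set ℝ}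
    (hB : ∀ᵐ x ∂volume.restrict (Ioo 0 1), x ∈ B) (hmono : MonotoneOn T B) :
    quantile ((volume.restrict (Ioo 0 1)).map T) ≤ᵐ[volume.restrict (Ioo 0 1)] T := by
  set μ := volume.restrict (Ioo (0 : ℝ) 1)
  have : IsProbabilityMeasure (μ.map T) := Measure.isProbabilityMeasure_map hT
  filter_upwards [hB, ae_restrict_mem measurableSet_Ioo] with y hyB hy
  rw [quantile_le_iff _ hy, cdf_eq_real, measureReal_def,
    Measure.map_apply_of_aemeasurable hT measurableSet_Iic]
  refine ENNReal.ofReal_le_iff_le_toReal (measure_ne_top _ _) |>.1 ?_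
  calc ENNReal.ofReal y = μ (Iic y) := by
        rw [Measure.restrict_apply' measurableSet_Ioo, volume_Iic_inter_Ioo hy.2.le]
    _ = μ (Iic y ∩ B) := (measure_inter_conull (ae_iff.1 hB)).symm
    _ ≤ μ (T ⁻¹' Iic (T y)) := measure_mono fun z hz => hmono hz.2 hyB hz.1

lemma ae_eq_of_ae_le_of_map_eq {α : Type*} [MeasurableSpace α] {μ : Measure α}
    [IsFiniteMeasure μ] {f g : α → ℝ} (hf : AEMeasurable f μ) (hg : AEMeasurable g μ)
    (hfg : f ≤ᵐ[μ] g) (hmap : μ.map f = μ.map g) : f =ᵐ[μ] g := by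
  have hsub : ∀ q : ℚ, g ⁻¹' Iic (q : ℝ) =ᵐ[μ] f ⁻¹' Iic (q : ℝ) := fun q =>
    ae_eq_of_ae_subset_of_measure_ge (hfg.mono fun x hx hgx => hx.trans hgx)
      (by rw [← Measure.map_apply_of_aemeasurable hf measurableSet_Iic, hmap,
        Measure.map_apply_of_aemeasurable hg measurableSet_Iic])
      (hg.nullMeasurable measurableSet_Iic) (measure_ne_top _ _)
  filter_upwards [hfg, ae_all_iff.2 hsub] with x hle hiff
  refine hle.antisymm (not_lt.1 fun hlt => ?_)
  obtain ⟨q, hfq, hqg⟩ := exists_rat_btwn hlt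
  exact ((hiff q).mpr hfq.le).not_gt hqg

theorem ae_increasing_is_quantile_general (T : ℝ → ℝ)
    (hT : MemLp T 2 (volume.restrict (Set.Ioo (0 : ℝ) 1)))
    (B : Set ℝ)
    (hBfull : volume (Set.Ioo (0 : ℝ) 1 \ B) = 0)
    (hmono : ∀ x ∈ B, ∀ y ∈ B, x < y → T x ≤ T y) :
    ∃ ν : Measure ℝ, IsProbabilityMeasure ν ∧ FinSecondMoment ν ∧
      T =ᵐ[volume.restrict (Set.Ioo (0 : ℝ) 1)] quantile ν := by
  set μ := volume.restrict (Ioo (0 : ℝ) 1)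
  have hTm : AEMeasurable T μ := hT.aestronglyMeasurable.aemeasurable
  have hB : ∀ᵐ x ∂μ, x ∈ B := (ae_restrict_iff' measurableSet_Ioo).2 <|
    (measure_eq_zero_iff_ae_notMem.1 hBfull).mono fun x hx hxI => not_not.1 fun h => hx ⟨hxI, h⟩
  have : IsProbabilityMeasure (μ.map T) := Measure.isProbabilityMeasure_map hTm
  refine ⟨μ.map T, this, finSecondMoment_map hT, .symm ?_⟩
  exact ae_eq_of_ae_le_of_map_eq (aemeasurable_quantile _) hTm
    (quantile_map_ae_le_of_monotoneOn hTm hB (monotoneOn_iff_forall_lt.2 hmono))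
    (map_quantile_volume_restrict_Ioo _)

/-- Every square-integrable, almost everywhere increasing function on `(0,1)` agrees
Lebesgue-almost everywhere with the quantile function of a Borel probability measure
on `ℝ` with finite second moment. -/
theorem ae_increasing_is_quantile (T : ℝ → ℝ)
    (hT : MemLp T 2 (volume.restrict (Set.Ioo (0 : ℝ) 1)))
    (B : Set ℝ) (hBmeas : MeasurableSet B) (hBsub : B ⊆ Set.Ioo 0 1)
    (hBfull : volume (Set.Ioo (0 : ℝ) 1 \ B) = 0)
    (hmono : ∀ x ∈ B, ∀ y ∈ B, x < y → T x ≤ T y) :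
    ∃ ν : Measure ℝ, IsProbabilityMeasure ν ∧ FinSecondMoment ν ∧
      T =ᵐ[volume.restrict (Set.Ioo (0 : ℝ) 1)] quantile ν :=
  ae_increasing_is_quantile_general T hT B hBfull hmono
end
end

section
/- Let H be a separable real Hilbert space, X ⊆ H a compact convex set, x₀ ∈ X, k ≥ 1 an integer, and P a Borel probability measure on H with P(X) = 1. Then there exists C* ∈ CC_{x₀,k}(X) attaining the minimum of K_X(C) = ∫ d(x, C)² dP(x) over all C ∈ CC_{x₀,k}(X); that is, the set of (k, x₀)-global principal convex components is nonempty. -/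
open MeasureTheory

noncomputable section

/-- `dim(C) ≤ k`: the smallest affine subspace containing `C` has dimension at most `k`. -/
def DimLE {H : Type*} [NormedAddCommGroup H] [InnerProductSpace ℝ H]
    (C : Set H) (k : ℕ) : Prop :=
  Module.rank ℝ (affineSpan ℝ C).direction ≤ (k : Cardinal)

/-- `C ∈ CC_{x₀,k}(X)`: `C` is a nonempty closed convex subset of `X` containing `x₀`
with `dim(C) ≤ k`. -/
def MemCC {H : Type*} [NormedAddCommGroup H] [InnerProductSpace ℝ H]
    (X : Set H) (x₀ : H) (k : ℕ) (C : Set H) : Prop :=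
  C.Nonempty ∧ IsClosed C ∧ C ⊆ X ∧ Convex ℝ C ∧ x₀ ∈ C ∧ DimLE C k

/-!
View the admissible sets as points of the space of nonempty compact subsets of `H` with the
Hausdorff metric. Those contained in the compact set `X` form a compact family, and each of the
conditions `x₀ ∈ C`, convexity and `dim C ≤ k` survives Hausdorff limits, since every point of a
limit is a limit of points of the approximating sets; for the dimension bound this works because
`dim C ≤ k` means that `C` contains no `k + 2` affinely independent points, and affine independence
is an open condition. As `d(x, C)` is `1`-Lipschitz in `C` and bounded by `diam X` for `x ∈ X`,
dominated convergence makes `K_X` continuous on this compact family, so it attains its minimum.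
-/

open Metric Set Filter Topology TopologicalSpace Module

section AffineDimension

variable {k V P : Type*} [DivisionRing k] [AddCommGroup V] [Module k V] [AddTorsor V P]

theorem rank_vectorSpan_finset_le {t : Finset P} {n : ℕ} (ht : t.card ≤ n + 1) :
    Module.rank k (vectorSpan k (t : Set P)) ≤ n := by
  classical
  rcases t.eq_empty_or_nonempty with rfl | hne
  · rw [Finset.coe_empty, vectorSpan_empty, rank_bot]
    exact zero_le
  obtain ⟨m, hm⟩ := Nat.exists_eq_add_of_lt hne.card_pos
  have hm' := finrank_vectorSpan_image_finset_le k id t (n := m) (by omega)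
  rw [Finset.image_id] at hm'
  have := finiteDimensional_vectorSpan_of_finite k t.finite_toSet
  rw [← finrank_eq_rank]
  exact_mod_cast hm'.trans (by omega)

theorem rank_vectorSpan_le_iff_forall_not_affineIndependent {s : Set P} {n : ℕ} :
    Module.rank k (vectorSpan k s) ≤ n ↔
      ∀ p : Fin (n + 2) → P, (∀ i, p i ∈ s) → ¬AffineIndependent k p := by
  constructor
  · intro hs p hps hp
    have hrange : Module.rank k (vectorSpan k (range p)) ≤ Module.rank k (vectorSpan k s) :=
      Submodule.rank_mono (vectorSpan_mono k (range_subset_iff.2 hps))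
    rw [← finrank_eq_rank, hp.finrank_vectorSpan (n := n + 1) (by simp)] at hrange
    exact absurd (hrange.trans hs) (by norm_cast; omega)
  · intro hs
    obtain ⟨t, hts, hspan, ht⟩ := exists_affineIndependent k V s
    have hcard : Cardinal.mk t < (n + 2 : ℕ) := by
      by_contra! h
      obtain ⟨e⟩ : Nonempty (Fin (n + 2) ↪ t) := by
        rw [← Cardinal.lift_mk_le']
        simpa using h
      exact hs _ (fun i => hts (e i).2) (ht.comp_embedding e)
    lift t to Finset P using
      Cardinal.lt_aleph0_iff_set_finite.1 (hcard.trans Cardinal.natCast_lt_aleph0)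
    rw [← direction_affineSpan, ← hspan, direction_affineSpan]
    simp only [Finset.coe_sort_coe, Cardinal.mk_coe_finset] at hcard
    have : t.card < n + 2 := by exact_mod_cast hcard
    exact rank_vectorSpan_finset_le (by omega)

end AffineDimension

theorem dimLE_iff_forall_not_affineIndependent {H : Type*} [NormedAddCommGroup H]
    [InnerProductSpace ℝ H] {C : Set H} {k : ℕ} :
    DimLE C k ↔ ∀ p : Fin (k + 2) → H, (∀ i, p i ∈ C) → ¬AffineIndependent ℝ p := by
  rw [DimLE, direction_affineSpan]
  exact rank_vectorSpan_le_iff_forall_not_affineIndependent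

namespace TopologicalSpace.NonemptyCompacts

variable {α : Type*} [MetricSpace α]

theorem isClosed_setOfPred_mem : IsClosed {p : α × NonemptyCompacts α | p.1 ∈ p.2} := by
  have : {p : α × NonemptyCompacts α | p.1 ∈ p.2} = {p | infDist p.1 p.2 = 0} := by
    ext p
    exact p.2.isCompact.isClosed.mem_iff_infDist_zero p.2.nonempty
  rw [this]
  exact isClosed_eq lipschitz_infDist.continuous continuous_const

theorem exists_tendsto_of_mem {β : Type*} {l : Filter β} {K : β → NonemptyCompacts α}
    {L : NonemptyCompacts α} (hK : Tendsto K l (𝓝 L)) {y : α} (hy : y ∈ L) :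
    ∃ x : β → α, (∀ b, x b ∈ K b) ∧ Tendsto x l (𝓝 y) := by
  choose x hxK hx using fun b => (K b).isCompact.exists_infDist_eq_dist (K b).nonempty y
  refine ⟨x, hxK, tendsto_iff_dist_tendsto_zero.2 ?_⟩
  have := ((lipschitz_infDist_set y).continuous.tendsto L).comp hK
  rw [infDist_zero_of_mem hy] at this
  simpa [Function.comp_def, hx, dist_comm] using this

theorem isClosed_setOfPred_forall_mem_imp {ι : Type*} {p : Set ((ι → α) × NonemptyCompacts α)}
    (hp : IsClosed p) :
    IsClosed {K : NonemptyCompacts α | ∀ f : ι → α, (∀ i, f i ∈ K) → (f, K) ∈ p} := by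
  refine IsSeqClosed.isClosed fun K L hK hKL f hf => ?_
  choose g hgK hg using fun i => exists_tendsto_of_mem hKL (hf i)
  exact hp.mem_of_tendsto ((tendsto_pi_nhds.2 hg).prodMk_nhds hKL)
    (Eventually.of_forall fun n => hK n (fun i => g i n) fun i => hgK i n)

theorem isClosed_setOfPred_convex {E : Type*} [NormedAddCommGroup E] [NormedSpace ℝ E] :
    IsClosed {K : NonemptyCompacts E | Convex ℝ (K : Set E)} := by
  have hconvex : {K : NonemptyCompacts E | Convex ℝ (K : Set E)} =
      ⋂ (a : ℝ) (b : ℝ) (_ : 0 ≤ a) (_ : 0 ≤ b) (_ : a + b = 1),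
        {K | ∀ f : Fin 2 → E, (∀ i, f i ∈ K) →
          (f, K) ∈ {q : (Fin 2 → E) × NonemptyCompacts E | a • q.1 0 + b • q.1 1 ∈ q.2}} := by
    ext K
    simp only [mem_iInter, mem_ofPred, Convex, StarConvex, Fin.forall_fin_succ_pi,
      Fin.forall_fin_two, Fin.cons_zero, Fin.cons_one, Fin.forall_fin_zero_pi, SetLike.mem_coe]
    exact ⟨fun h a b ha hb hab x y hxy => h hxy.1 hxy.2 ha hb hab,
      fun h x hx y hy a b ha hb hab => h a b ha hb hab x y ⟨hx, hy⟩⟩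
  rw [hconvex]
  refine isClosed_iInter fun a => isClosed_iInter fun b => isClosed_iInter fun _ =>
    isClosed_iInter fun _ => isClosed_iInter fun _ => isClosed_setOfPred_forall_mem_imp ?_
  exact isClosed_setOfPred_mem.preimage
    (f := fun q : (Fin 2 → E) × NonemptyCompacts E => (a • q.1 0 + b • q.1 1, q.2)) (by fun_prop)

end TopologicalSpace.NonemptyCompacts

theorem continuousOn_integral_infDist_sq {α : Type*} [MetricSpace α] [MeasurableSpace α]
    [OpensMeasurableSpace α] {μ : Measure α} [IsFiniteMeasure μ] {X : Set α}
    (hX : Bornology.IsBounded X) (hμX : ∀ᵐ x ∂μ, x ∈ X) :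
    ContinuousOn (fun K : NonemptyCompacts α => ∫ x, infDist x (K : Set α) ^ 2 ∂μ)
      {K | ↑K ⊆ X} := by
  refine continuousOn_of_dominated (bound := fun _ => diam X ^ 2)
    (fun K _ => ((continuous_infDist_pt _).pow 2).aestronglyMeasurable) (fun K hK => ?_)
    (integrable_const _)
    (ae_of_all _ fun x => ((lipschitz_infDist_set x).continuous.pow 2).continuousOn)
  filter_upwards [hμX] with x hx
  obtain ⟨y, hy⟩ := K.nonempty
  have hdist : infDist x (K : Set α) ≤ diam X :=
    (infDist_le_dist_of_mem hy).trans (dist_le_diam_of_mem hX hx (hK hy))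
  rw [Real.norm_eq_abs, abs_of_nonneg (by positivity)]
  exact pow_le_pow_left₀ infDist_nonneg hdist 2

section PrincipalConvexComponent

variable {H : Type*} [NormedAddCommGroup H] [InnerProductSpace ℝ H]

theorem isClosed_setOfPred_dimLE (k : ℕ) :
    IsClosed {K : NonemptyCompacts H | DimLE (K : Set H) k} := by
  simp only [dimLE_iff_forall_not_affineIndependent]
  exact NonemptyCompacts.isClosed_setOfPred_forall_mem_imp
    (isOpen_setOfPred_affineIndependent.preimage continuous_fst).isClosed_compl

theorem memCC_singleton {X : Set H} {x₀ : H} (hx₀ : x₀ ∈ X) (k : ℕ) : MemCC X x₀ k {x₀} :=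
  ⟨singleton_nonempty x₀, isClosed_singleton, singleton_subset_iff.2 hx₀, convex_singleton x₀,
    rfl, by rw [DimLE, direction_affineSpan, vectorSpan_singleton, rank_bot]; exact zero_le⟩

theorem isCompact_setOfPred_memCC {X : Set H} (hX : IsCompact X) (x₀ : H) (k : ℕ) :
    IsCompact {K : NonemptyCompacts H | MemCC X x₀ k K} := by
  have hCC : {K : NonemptyCompacts H | MemCC X x₀ k K} =
      {K : NonemptyCompacts H | ↑K ⊆ X} ∩
        ({K | Convex ℝ (K : Set H)} ∩ ({K | x₀ ∈ K} ∩ {K | DimLE (K : Set H) k})) := by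
    ext K
    simp [MemCC, K.nonempty, K.isCompact.isClosed]
  rw [hCC]
  refine (NonemptyCompacts.isCompact_subsets_of_isCompact hX).inter_right
    (NonemptyCompacts.isClosed_setOfPred_convex.inter (.inter ?_ (isClosed_setOfPred_dimLE k)))
  exact NonemptyCompacts.isClosed_setOfPred_mem.preimage (Continuous.prodMk_right x₀)

end PrincipalConvexComponent

theorem exists_global_principal_convex_component_general
    {H : Type*} [NormedAddCommGroup H] [InnerProductSpace ℝ H]
    [MeasurableSpace H] [BorelSpace H]
    (X : Set H) (hXc : IsCompact X)
    (x₀ : H) (hx₀ : x₀ ∈ X) (k : ℕ)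
    (P : Measure H) (hP : IsProbabilityMeasure P) (hPX : P X = 1) :
    ∃ Cs : Set H, MemCC X x₀ k Cs ∧
      ∀ C : Set H, MemCC X x₀ k C →
        ∫ x, Metric.infDist x Cs ^ 2 ∂P ≤ ∫ x, Metric.infDist x C ^ 2 ∂P := by
  have hX_ae : ∀ᵐ x ∂P, x ∈ X := by
    rw [ae_mem_iff_measure_eq hXc.isClosed.measurableSet.nullMeasurableSet, hPX, measure_univ]
  obtain ⟨Cs, hCs, hmin⟩ := (isCompact_setOfPred_memCC hXc x₀ k).exists_isMinOn
    ⟨{x₀}, memCC_singleton hx₀ k⟩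
    ((continuousOn_integral_infDist_sq hXc.isBounded hX_ae).mono fun K hK => hK.2.2.1)
  refine ⟨Cs, hCs, fun C hC => ?_⟩
  let K : NonemptyCompacts H := ⟨⟨C, hXc.of_isClosed_subset hC.2.1 hC.2.2.1⟩, hC.1⟩
  exact isMinOn_iff.1 hmin K hC

/-- Existence of a `(k, x₀)`-global principal convex component: the functional
`K_X(C) = ∫ d(x,C)² dP(x)` attains its minimum over `CC_{x₀,k}(X)`. -/
theorem exists_global_principal_convex_component
    {H : Type*} [NormedAddCommGroup H] [InnerProductSpace ℝ H] [CompleteSpace H]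
    [SecondCountableTopology H] [MeasurableSpace H] [BorelSpace H]
    (X : Set H) (hXc : IsCompact X) (hXconv : Convex ℝ X)
    (x₀ : H) (hx₀ : x₀ ∈ X) (k : ℕ) (hk : 1 ≤ k)
    (P : Measure H) (hP : IsProbabilityMeasure P) (hPX : P X = 1) :
    ∃ Cs : Set H, MemCC X x₀ k Cs ∧
      ∀ C : Set H, MemCC X x₀ k C →
        ∫ x, Metric.infDist x Cs ^ 2 ∂P ≤ ∫ x, Metric.infDist x C ^ 2 ∂P :=
  exists_global_principal_convex_component_general X hXc x₀ hx₀ k P hP hPX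
end
end
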